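/- Let m, n ≥ 0 be integers with p = 2m+n ≥ 2 and let Δ ≥ 5 be an integer. Let C be an (m,n)-colored mixed graph whose underlying graph is complete and which has property Q^{Δ-1,j}_{1+(Δ-j)(Δ-2)}. Then every (m,n)-colored mixed graph G whose underlying simple graph has maximum degree at most Δ and degeneracy at most Δ-1 admits a homomorphism to C. -/

import Mathlib

/-- The possible kinds of links from a vertex `u` to a vertex `v` in an
`(m,n)`-colored mixed graph: an arc `u → v` of one of `m` colors, an arc
`v → u` of one of `m` colors, or an (unoriented) edge of one of `n` colors. -/
inductive Link (m n : ℕ) : Type where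
  | arcOut : Fin m → Link m n
  | arcIn : Fin m → Link m n
  | edge : Fin n → Link m n

/-- The link as seen from the other endpoint. -/
def Link.flip {m n : ℕ} : Link m n → Link m n
  | .arcOut c => .arcIn c
  | .arcIn c => .arcOut c
  | .edge c => .edge c

/-- An `(m,n)`-colored mixed graph on vertex type `V`: between any two distinct
vertices there is at most one link (a colored arc in either direction or a
colored edge), and there are no loops. -/
structure CMGraph (m n : ℕ) (V : Type) where
  link : V → V → Option (Link m n)
  symm : ∀ u v, link v u = (link u v).map Link.flip
  loopless : ∀ v, link v v = none

/-- The underlying simple graph of an `(m,n)`-colored mixed graph. -/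
def CMGraph.underlying {m n : ℕ} {V : Type} (G : CMGraph m n V) : SimpleGraph V where
  Adj u v := (G.link u v).isSome
  symm := by
    constructor
    intro u v h
    change (G.link u v).isSome at h
    show (G.link v u).isSome
    rw [G.symm u v]
    rcases hx : G.link u v with _ | l
    · rw [hx] at h; simp at h
    · simp
  loopless := by
    constructor
    intro v h
    change (G.link v v).isSome at h
    rw [G.loopless v] at h
    simp at h

/-- A homomorphism of `(m,n)`-colored mixed graphs: arcs map to arcs of the same
color and direction, edges map to edges of the same color. -/
def IsCMHom {m n : ℕ} {V W : Type} (G : CMGraph m n V) (H : CMGraph m n W)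
    (f : V → W) : Prop :=
  ∀ u v l, G.link u v = some l → H.link (f u) (f v) = some l

/-- `G` admits a homomorphism to some `(m,n)`-colored mixed graph on at most `k`
vertices, i.e. `χ_{(m,n)}(G) ≤ k`. -/
def CMChromAtMost {m n : ℕ} {V : Type} (G : CMGraph m n V) (k : ℕ) : Prop :=
  ∃ (W : Type) (inst : Fintype W) (H : CMGraph m n W) (f : V → W),
    @Fintype.card W inst ≤ k ∧ IsCMHom G H f

/-- Every `(m,n)`-colored mixed graph admitting a homomorphism from `G` has at
least `k` vertices, i.e. `χ_{(m,n)}(G) ≥ k`. -/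
def CMChromAtLeast {m n : ℕ} {V : Type} (G : CMGraph m n V) (k : ℕ) : Prop :=
  ∀ (W : Type) (inst : Fintype W) (H : CMGraph m n W) (f : V → W),
    IsCMHom G H f → k ≤ @Fintype.card W inst

/-- The acyclic chromatic number of `G` is at most `k`: there is a proper
`k`-coloring in which the union of any two color classes induces a forest. -/
def AcycChromAtMost {V : Type} (G : SimpleGraph V) (k : ℕ) : Prop :=
  ∃ c : V → Fin k, (∀ u v, G.Adj u v → c u ≠ c v) ∧
    ∀ i j : Fin k, (G.induce {v | c v = i ∨ c v = j}).IsAcyclic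

/-- The edge set of `G` can be decomposed into `r` forests. -/
def ArbAtMost {V : Type} (G : SimpleGraph V) (r : ℕ) : Prop :=
  ∃ F : Fin r → SimpleGraph V,
    (∀ i, F i ≤ G) ∧
    (∀ i, (F i).IsAcyclic) ∧
    (∀ u v, G.Adj u v → ∃ i, (F i).Adj u v) ∧
    (∀ i j, i ≠ j → ∀ u v, ¬ ((F i).Adj u v ∧ (F j).Adj u v))

/-- Every vertex of `G` has degree at most `d`. -/
def MaxDegAtMost {V : Type} (G : SimpleGraph V) (d : ℕ) : Prop :=
  ∀ v, (G.neighborSet v).ncard ≤ d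

/-- `G` is `d`-degenerate: every nonempty (induced) subgraph has a vertex of
degree at most `d` in it. -/
def DegenAtMost {V : Type} (G : SimpleGraph V) (d : ℕ) : Prop :=
  ∀ s : Set V, s.Nonempty → ∃ v ∈ s, (G.neighborSet v ∩ s).ncard ≤ d

/-! Map the vertices one at a time along a degeneracy ordering, so that a new vertex `v` has
`j ≤ Δ - 1` mapped neighbours, keeping the mapped neighbours of every unmapped vertex on distinct
images. Property `Q` then offers at least `1 + (Δ - j)(Δ - 2)` images for `v` compatible with its
mapped neighbours, while each of the at most `Δ - j` unmapped neighbours `x` of `v` rules out only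
the at most `Δ - 2` images of its other mapped neighbours; so an image for `v` remains that also
preserves the invariant. -/

theorem Link.flip_flip {m n : ℕ} (l : Link m n) : l.flip.flip = l := by
  cases l <;> rfl

theorem Set.ncard_biUnion_le_ncard_mul {ι α : Type*} {t : Set ι} (ht : t.Finite)
    {s : ι → Set α} {k : ℕ} (hs : ∀ i ∈ t, (s i).ncard ≤ k) :
    (⋃ i ∈ t, s i).ncard ≤ t.ncard * k := by
  have hunion : (⋃ i ∈ t, s i) = ⋃ i ∈ ht.toFinset, s i := by simp
  rw [hunion, Set.ncard_eq_toFinset_card t ht]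
  calc (⋃ i ∈ ht.toFinset, s i).ncard ≤ ∑ i ∈ ht.toFinset, (s i).ncard :=
        ht.toFinset.set_ncard_biUnion_le s
    _ ≤ ht.toFinset.card * k :=
        Finset.sum_le_card_nsmul _ _ _ fun i hi => hs i (ht.mem_toFinset.1 hi)

theorem SimpleGraph.ncard_biUnion_image_neighborSet_le {V W : Type} [Finite V]
    {H : SimpleGraph V} {Δ : ℕ} (hdeg : MaxDegAtMost H Δ) {s : Set V} {v : V} (hv : v ∉ s)
    (hout : ∀ x ∉ insert v s, (H.neighborSet x ∩ insert v s).ncard ≤ Δ - 1) (f : V → W) :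
    (⋃ x ∈ H.neighborSet v \ s, f '' (H.neighborSet x ∩ s)).ncard ≤
      (Δ - (H.neighborSet v ∩ s).ncard) * (Δ - 2) := by
  have hcard : (H.neighborSet v \ s).ncard ≤ Δ - (H.neighborSet v ∩ s).ncard := by
    have := Set.ncard_inter_add_ncard_sdiff_eq_ncard (H.neighborSet v) s
    have := hdeg v
    omega
  refine (Set.ncard_biUnion_le_ncard_mul (Set.toFinite _) fun x hx => ?_).trans
    (Nat.mul_le_mul_right _ hcard)
  have hxv : v ∈ H.neighborSet x := H.adj_symm hx.1
  have hx' : x ∉ insert v s := by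
    rintro (rfl | hxs)
    exacts [H.loopless.irrefl x hx.1, hx.2 hxs]
  have h := hout x hx'
  rw [Set.inter_insert_of_mem hxv, Set.ncard_insert_of_notMem fun h => hv h.2] at h
  exact (Set.ncard_image_le).trans (by omega)

theorem CMGraph.link_eq_some_flip {m n : ℕ} {V : Type} (G : CMGraph m n V) {u v : V}
    {l : Link m n} (h : G.link u v = some l) : G.link v u = some l.flip := by
  rw [G.symm, h, Option.map_some]

theorem CMGraph.adj_of_link_eq_some {m n : ℕ} {V : Type} (G : CMGraph m n V) {u v : V}
    {l : Link m n} (h : G.link u v = some l) : G.underlying.Adj u v := by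
  change (G.link u v).isSome
  rw [h]
  rfl

/-- Property `Q^{t,j}_{g(j)}`. -/
def CMGraph.HasPropertyQ {m n : ℕ} {W : Type} (C : CMGraph m n W) (t : ℕ) (g : ℕ → ℕ) :
    Prop :=
  ∀ j : ℕ, j ≤ t → ∀ J : Fin j → W, Function.Injective J → ∀ a : Fin j → Link m n,
    g j ≤ {u | ∀ i : Fin j, C.link (J i) u = some (a i)}.ncard

theorem CMGraph.HasPropertyQ.le_ncard_setOf {m n : ℕ} {W ι : Type} {C : CMGraph m n W}
    {t : ℕ} {g : ℕ → ℕ} (hC : C.HasPropertyQ t g) {S : Set ι} (hS : S.Finite)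
    (hSt : S.ncard ≤ t) {f : ι → W} (hf : S.InjOn f) {a : ι → Option (Link m n)}
    (ha : ∀ u ∈ S, (a u).isSome) :
    g S.ncard ≤ {c | ∀ u ∈ S, C.link (f u) c = a u}.ncard := by
  have := hS.to_subtype
  let e := Finite.equivFin S
  rw [← Nat.card_coe_set_eq] at hSt ⊢
  have hJ : Function.Injective fun i => f (e.symm i) := fun i i' h =>
    e.symm.injective (Subtype.ext (hf (e.symm i).2 (e.symm i').2 h))
  convert hC _ hSt _ hJ fun i => (a (e.symm i)).get (ha _ (e.symm i).2) using 3
  ext c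
  simp only [Option.some_get, e.symm.forall_congr_left, Subtype.forall, Equiv.symm_symm,
    Equiv.symm_apply_apply]

namespace CMGraph

variable {m n : ℕ} {V W : Type} {G : CMGraph m n V} {C : CMGraph m n W}

variable (G C) in
/-- The injectivity on `N(x) ∩ s` for unmapped `x` is what lets property `Q` be applied to the
mapped neighbours of `x` once `x` is mapped in turn. -/
structure IsExtendableHomOn (s : Set V) (f : V → W) : Prop where
  map_link : ∀ u ∈ s, ∀ v ∈ s, ∀ l, G.link u v = some l → C.link (f u) (f v) = some l
  injOn_neighborSet : ∀ x ∉ s, (G.underlying.neighborSet x ∩ s).InjOn f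

theorem isExtendableHomOn_empty (f : V → W) : G.IsExtendableHomOn C ∅ f :=
  ⟨by simp, by simp⟩

theorem IsExtendableHomOn.update_insert [DecidableEq V] {s : Set V} {f : V → W} {v : V} {c : W}
    (hf : G.IsExtendableHomOn C s f) (hv : v ∉ s)
    (hlink : ∀ u ∈ G.underlying.neighborSet v ∩ s, C.link (f u) c = G.link u v)
    (hfree : ∀ x ∈ G.underlying.neighborSet v \ s,
      c ∉ f '' (G.underlying.neighborSet x ∩ s)) :
    G.IsExtendableHomOn C (insert v s) (Function.update f v c) := by
  have hfs : Set.EqOn (Function.update f v c) f s := fun u hu =>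
    Function.update_of_ne (ne_of_mem_of_not_mem hu hv) c f
  have hto : ∀ u ∈ s, ∀ l, G.link u v = some l → C.link (f u) c = some l := fun u hu l hl =>
    (hlink u ⟨(G.adj_of_link_eq_some hl).symm, hu⟩).trans hl
  refine ⟨?_, fun x hx => ?_⟩
  · rintro u (rfl | hu) w (rfl | hw) l hl
    · simp [G.loopless] at hl
    · rw [Function.update_self, hfs hw]
      simpa [Link.flip_flip] using C.link_eq_some_flip (hto w hw _ (G.link_eq_some_flip hl))
    · rw [Function.update_self, hfs hu]
      exact hto u hu l hl
    · rw [hfs hu, hfs hw]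
      exact hf.map_link u hu w hw l hl
  · rw [Set.mem_insert_iff, not_or] at hx
    have hinj : (G.underlying.neighborSet x ∩ s).InjOn (Function.update f v c) :=
      (hf.injOn_neighborSet x hx.2).congr (hfs.symm.mono Set.inter_subset_right)
    by_cases hxv : v ∈ G.underlying.neighborSet x
    · rw [Set.inter_insert_of_mem hxv, Set.injOn_insert fun h => hv h.2, Function.update_self,
        (hfs.mono Set.inter_subset_right).image_eq]
      exact ⟨hinj, hfree x ⟨G.underlying.adj_symm hxv, hx.2⟩⟩
    · rwa [Set.inter_insert_of_notMem hxv]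

theorem HasPropertyQ.nonempty {t : ℕ} {g : ℕ → ℕ} (hC : C.HasPropertyQ t g) (hg : 0 < g 0) :
    Nonempty W := by
  have h := hC 0 (Nat.zero_le t) Fin.elim0 (Function.injective_of_subsingleton _) Fin.elim0
  obtain ⟨w, -⟩ := Set.nonempty_of_ncard_ne_zero (hg.trans_le h).ne'
  exact ⟨w⟩

theorem IsExtendableHomOn.exists_update_insert [Finite V] [DecidableEq V] {Δ : ℕ}
    (hQ : C.HasPropertyQ (Δ - 1) fun j => 1 + (Δ - j) * (Δ - 2))
    (hdeg : MaxDegAtMost G.underlying Δ) {s : Set V} {f : V → W} {v : V}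
    (hf : G.IsExtendableHomOn C s f) (hv : v ∉ s)
    (hin : (G.underlying.neighborSet v ∩ s).ncard ≤ Δ - 1)
    (hout : ∀ x ∉ insert v s,
      (G.underlying.neighborSet x ∩ insert v s).ncard ≤ Δ - 1) :
    ∃ c, G.IsExtendableHomOn C (insert v s) (Function.update f v c) := by
  set N := G.underlying.neighborSet
  set allowed := {c | ∀ u ∈ N v ∩ s, C.link (f u) c = G.link u v}
  set forbidden := ⋃ x ∈ N v \ s, f '' (N x ∩ s)
  have hallowed : 1 + (Δ - (N v ∩ s).ncard) * (Δ - 2) ≤ allowed.ncard :=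
    hQ.le_ncard_setOf (Set.toFinite _) hin (hf.injOn_neighborSet v hv)
      fun u hu => G.underlying.adj_symm hu.1
  have hforbidden : forbidden.ncard ≤ (Δ - (N v ∩ s).ncard) * (Δ - 2) :=
    SimpleGraph.ncard_biUnion_image_neighborSet_le hdeg hv hout f
  have hfinite : forbidden.Finite :=
    (Set.toFinite _).biUnion fun x _ => (Set.toFinite _).image f
  obtain ⟨c, hc, hcf⟩ := 
    Set.exists_mem_notMem_of_ncard_lt_ncard (s := forbidden) (t := allowed) (by omega) hfinite
  exact ⟨c, hf.update_insert hv hc fun x hx hcx => hcf (Set.mem_biUnion hx hcx)⟩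

theorem exists_isExtendableHomOn [Finite V] [Nonempty W] {Δ : ℕ}
    (hQ : C.HasPropertyQ (Δ - 1) fun j => 1 + (Δ - j) * (Δ - 2))
    (hdeg : MaxDegAtMost G.underlying Δ) (hdegen : DegenAtMost G.underlying (Δ - 1))
    (s : Set V) (hs : ∀ x ∉ s, (G.underlying.neighborSet x ∩ s).ncard ≤ Δ - 1) :
    ∃ f, G.IsExtendableHomOn C s f := by
  classical
  induction s using WellFoundedLT.induction with
  | _ s ih =>
  rcases s.eq_empty_or_nonempty with rfl | hne
  · exact ⟨fun _ => Classical.arbitrary W, isExtendableHomOn_empty _⟩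
  obtain ⟨v, hvs, hvdeg⟩ := hdegen s hne
  have hsub : G.underlying.neighborSet v ∩ (s \ {v}) ⊆ G.underlying.neighborSet v ∩ s :=
    Set.inter_subset_inter_right _ Set.sdiff_subset
  obtain ⟨f, hf⟩ := ih (s \ {v}) (Set.sdiff_singleton_ssubset.2 hvs) fun x hx => by
    by_cases hxv : x = v
    · subst hxv
      exact (Set.ncard_le_ncard hsub).trans hvdeg
    · exact (Set.ncard_le_ncard (Set.inter_subset_inter_right _ Set.sdiff_subset)).trans
        (hs x fun hxs => hx ⟨hxs, hxv⟩)
  rw [← Set.insert_sdiff_self_of_mem hvs] at hs ⊢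
  obtain ⟨c, hc⟩ := hf.exists_update_insert hQ hdeg (fun h => h.2 rfl)
    ((Set.ncard_le_ncard hsub).trans hvdeg) hs
  exact ⟨_, hc⟩

end CMGraph

theorem hom_to_complete_with_property_Q_general (m n Δ : ℕ)
    (W : Type) (C : CMGraph m n W)
    (hQ : ∀ j : ℕ, j ≤ Δ - 1 →
      ∀ J : Fin j → W, Function.Injective J →
        ∀ a : Fin j → Link m n,
          1 + (Δ - j) * (Δ - 2) ≤
            {u | ∀ i : Fin j, C.link (J i) u = some (a i)}.ncard)
    (V : Type) [Fintype V] (G : CMGraph m n V)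
    (hdeg : MaxDegAtMost G.underlying Δ)
    (hdegen : DegenAtMost G.underlying (Δ - 1)) :
    ∃ f : V → W, IsCMHom G C f := by
  have : Nonempty W := CMGraph.HasPropertyQ.nonempty hQ (by omega)
  obtain ⟨f, hf⟩ := G.exists_isExtendableHomOn hQ hdeg hdegen Set.univ (by simp)
  exact ⟨f, fun u v l => hf.map_link u trivial v trivial l⟩

/-- Let `p = 2m+n ≥ 2`, `Δ ≥ 5`, and let `C` be an `(m,n)`-colored
mixed graph whose underlying graph is complete and which has property
`Q^{Δ-1,j}_{1+(Δ-j)(Δ-2)}`. Then every `(m,n)`-colored mixed graph whose underlying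
simple graph has maximum degree at most `Δ` and degeneracy at most `Δ-1` admits a
homomorphism to `C`. -/
theorem hom_to_complete_with_property_Q (m n Δ : ℕ) (hp : 2 ≤ 2 * m + n) (hΔ : 5 ≤ Δ)
    (W : Type) [Fintype W] (C : CMGraph m n W)
    (hcomplete : ∀ u v : W, u ≠ v → (C.link u v).isSome)
    (hQ : ∀ j : ℕ, j ≤ Δ - 1 →
      ∀ J : Fin j → W, Function.Injective J →
        ∀ a : Fin j → Link m n,
          1 + (Δ - j) * (Δ - 2) ≤
            {u | ∀ i : Fin j, C.link (J i) u = some (a i)}.ncard)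
    (V : Type) [Fintype V] (G : CMGraph m n V)
    (hdeg : MaxDegAtMost G.underlying Δ)
    (hdegen : DegenAtMost G.underlying (Δ - 1)) :
    ∃ f : V → W, IsCMHom G C f :=
  hom_to_complete_with_property_Q_general m n Δ W C hQ V G hdeg hdegen
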